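/- arXiv:2509.01160 — 6 statements merged into one kernel-verified Lean document; each statement's English description precedes it below -/
import Mathlib

section
/- Let P be a non-trivial product distribution on {0,1}^n (i.e., the coordinates z_1,...,z_n are independent with p_j = Pr[z_j = 1] satisfying 0 < p_j < 1 for all j). If A ⊆ {0,1}^n is an antichain with respect to the coordinatewise partial order (equivalently, inclusion of the corresponding subsets of [n]), then Pr_{z∼P}[z ∈ A] ≤ max_{ℓ ∈ {0,1,...,n}} Pr_{z∼P}[|z| = ℓ], where |z| denotes the number of coordinates of z equal to 1. -/
open Finset

/-- The probability that a sample from the product distribution on `{0,1}^n`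
with parameters `p` equals the indicator vector of the set `s ⊆ [n]`
(i.e. coordinates in `s` equal `1`, the others equal `0`). -/
def prodWeight {n : ℕ} (p : Fin n → ℝ) (s : Finset (Fin n)) : ℝ :=
  (∏ j ∈ s, p j) * ∏ j ∈ sᶜ, (1 - p j)

/-!
Write `W k` for the measure of the `k`-th layer and `∇S` for the upper shadow. By induction on the
ground set, adjoining one coordinate at a time (Harper's product theorem for a product with a
two-element chain), the sequence `W` is log-concave and the measure has the normalized matching
property `μ(S) / W k ≤ μ(∇S) / W (k + 1)` for every family `S` of `k`-sets. Pushing an antichain `A`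
up through the layers then gives the LYM inequality `∑ k, μ(A_k) / W k ≤ 1`, hence
`μ(A) ≤ max_k W k`.
-/

namespace ProductSperner

lemma mul_le_mul_of_mul_le_sq {a b c d : ℝ} (hb : 0 < b) (hc : 0 < c)
    (hd : 0 ≤ d) (habc : a * c ≤ b ^ 2) (hbcd : b * d ≤ c ^ 2) : a * d ≤ b * c := by
  refine le_of_mul_le_mul_right ?_ (mul_pos hb hc)
  calc a * d * (b * c) = (a * c) * (b * d) := by ring
    _ ≤ b ^ 2 * c ^ 2 := mul_le_mul habc hbcd (by positivity) (by positivity)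
    _ = b * c * (b * c) := by ring

-- Convolving a log-concave sequence `…, a, b, c, d, …` with `(q, r)` keeps it log-concave.
lemma mix_mul_mix_le_sq {q r a b c d : ℝ} (hq : 0 ≤ q) (hr : 0 ≤ r) (habc : a * c ≤ b ^ 2)
    (hbcd : b * d ≤ c ^ 2) (habcd : a * d ≤ b * c) :
    (q * b + r * a) * (q * d + r * c) ≤ (q * c + r * b) ^ 2 := by
  nlinarith [mul_le_mul_of_nonneg_left habc (mul_nonneg hr hr),
    mul_le_mul_of_nonneg_left hbcd (mul_nonneg hq hq),
    mul_le_mul_of_nonneg_left habcd (mul_nonneg hq hr)]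

-- `h₀`, `h₁` and `h₀₁` bound the coefficients of `q ^ 2`, `r ^ 2` and `q * r` after expanding.
lemma mix_mul_mix_le {q r W₀ W₁ W₂ a₀ a₁ b₀ c : ℝ} (hq : 0 ≤ q) (hr : 0 ≤ r)
    (h₀ : W₂ * a₀ ≤ W₁ * b₀) (h₁ : W₁ * a₁ ≤ W₀ * c)
    (h₀₁ : W₂ * a₁ + W₁ * a₀ ≤ W₁ * c + W₀ * b₀) :
    (q * W₂ + r * W₁) * (q * a₀ + r * a₁) ≤ (q * W₁ + r * W₀) * (q * b₀ + r * c) := by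
  nlinarith [mul_le_mul_of_nonneg_left h₀ (mul_nonneg hq hq),
    mul_le_mul_of_nonneg_left h₁ (mul_nonneg hr hr),
    mul_le_mul_of_nonneg_left h₀₁ (mul_nonneg hq hr)]

variable {α : Type*} [DecidableEq α] {p : α → ℝ} {V : Finset α} {x : α} {k : ℕ}
  {S T : Finset (Finset α)}

def cubeWeight (p : α → ℝ) (V s : Finset α) : ℝ :=
  ∏ j ∈ V, if j ∈ s then p j else 1 - p j

def layerWeight (p : α → ℝ) (V : Finset α) (k : ℕ) : ℝ :=
  ∑ s ∈ V.powersetCard k, cubeWeight p V s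

def upperLayer (V : Finset α) (k : ℕ) (S : Finset (Finset α)) : Finset (Finset α) :=
  {t ∈ V.powersetCard k | ∃ s ∈ S, s ⊆ t}

lemma cubeWeight_pos (hp : ∀ j, 0 < p j ∧ p j < 1) (V s : Finset α) : 0 < cubeWeight p V s :=
  prod_pos fun j _ => by split_ifs <;> linarith [hp j]

lemma sum_cubeWeight_nonneg (hp : ∀ j, 0 < p j ∧ p j < 1) (V : Finset α)
    (S : Finset (Finset α)) : 0 ≤ ∑ s ∈ S, cubeWeight p V s :=
  sum_nonneg fun s _ => (cubeWeight_pos hp V s).le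

lemma sum_cubeWeight_mono (hp : ∀ j, 0 < p j ∧ p j < 1) (V : Finset α) (h : S ⊆ T) :
    ∑ s ∈ S, cubeWeight p V s ≤ ∑ s ∈ T, cubeWeight p V s :=
  sum_le_sum_of_subset_of_nonneg h fun s _ _ => (cubeWeight_pos hp V s).le

lemma layerWeight_nonneg (hp : ∀ j, 0 < p j ∧ p j < 1) (V : Finset α) (k : ℕ) :
    0 ≤ layerWeight p V k :=
  sum_cubeWeight_nonneg hp V _

lemma layerWeight_pos (hp : ∀ j, 0 < p j ∧ p j < 1) (hk : k ≤ V.card) :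
    0 < layerWeight p V k :=
  sum_pos (fun s _ => cubeWeight_pos hp V s) (powersetCard_nonempty.2 hk)

lemma layerWeight_eq_zero (hk : V.card < k) : layerWeight p V k = 0 := by
  rw [layerWeight, powersetCard_eq_empty.2 hk, sum_empty]

lemma cubeWeight_insert (hx : x ∉ V) (s : Finset α) :
    cubeWeight p (insert x V) s = (if x ∈ s then p x else 1 - p x) * cubeWeight p V s :=
  prod_insert hx

lemma cubeWeight_insert_of_notMem (hx : x ∉ V) (s : Finset α) :
    cubeWeight p V (insert x s) = cubeWeight p V s :=
  prod_congr rfl fun j hj => by simp only [mem_insert, ne_of_mem_of_not_mem hj hx, false_or]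

lemma sum_nonMemberSubfamily_add_sum_memberSubfamily {M : Type*} [AddCommMonoid M]
    (f : Finset α → M) (a : α) (S : Finset (Finset α)) :
    ∑ s ∈ S.nonMemberSubfamily a, f s + ∑ s ∈ S.memberSubfamily a, f (insert a s) =
      ∑ s ∈ S, f s := by
  rw [← sum_filter_not_add_sum_filter S (a ∈ ·), ← image_insert_memberSubfamily, sum_image]
  · rfl
  · intro s hs t ht hst
    rw [← erase_insert (mem_memberSubfamily.1 hs).2, ← erase_insert (mem_memberSubfamily.1 ht).2,
      hst]

lemma memberSubfamily_mono (a : α) (h : S ⊆ T) : S.memberSubfamily a ⊆ T.memberSubfamily a :=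
  fun _ hs => mem_memberSubfamily.2 ⟨h (mem_memberSubfamily.1 hs).1, (mem_memberSubfamily.1 hs).2⟩

lemma sum_cubeWeight_insert (hx : x ∉ V) (S : Finset (Finset α)) :
    ∑ s ∈ S, cubeWeight p (insert x V) s =
      (1 - p x) * ∑ s ∈ S.nonMemberSubfamily x, cubeWeight p V s +
        p x * ∑ s ∈ S.memberSubfamily x, cubeWeight p V s := by
  rw [← sum_nonMemberSubfamily_add_sum_memberSubfamily _ x, mul_sum, mul_sum]
  congr 1 <;> refine sum_congr rfl fun s hs => ?_
  · rw [cubeWeight_insert hx, if_neg (mem_nonMemberSubfamily.1 hs).2]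
  · rw [cubeWeight_insert hx, if_pos (mem_insert_self x s), cubeWeight_insert_of_notMem hx]

lemma nonMemberSubfamily_powersetCard_insert (hx : x ∉ V) (k : ℕ) :
    (powersetCard k (insert x V)).nonMemberSubfamily x = powersetCard k V := by
  ext s
  simp only [mem_nonMemberSubfamily, mem_powersetCard]
  constructor
  · rintro ⟨⟨hsV, hs⟩, hxs⟩
    exact ⟨(subset_insert_iff_of_notMem hxs).1 hsV, hs⟩
  · rintro ⟨hsV, hs⟩
    exact ⟨⟨hsV.trans (subset_insert x V), hs⟩, fun h => hx (hsV h)⟩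

lemma memberSubfamily_powersetCard_insert (hx : x ∉ V) (k : ℕ) :
    (powersetCard (k + 1) (insert x V)).memberSubfamily x = powersetCard k V := by
  ext s
  simp only [mem_memberSubfamily, mem_powersetCard]
  constructor
  · rintro ⟨⟨hsV, hs⟩, hxs⟩
    refine ⟨(insert_subset_insert_iff hxs).1 hsV, ?_⟩
    rwa [card_insert_of_notMem hxs, add_left_inj] at hs
  · rintro ⟨hsV, hs⟩
    have hxs : x ∉ s := fun h => hx (hsV h)
    exact ⟨⟨insert_subset_insert x hsV, by rw [card_insert_of_notMem hxs, hs]⟩, hxs⟩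

lemma layerWeight_insert_zero (hx : x ∉ V) :
    layerWeight p (insert x V) 0 = (1 - p x) * layerWeight p V 0 := by
  simp [layerWeight, cubeWeight_insert hx]

lemma layerWeight_insert_succ (hx : x ∉ V) (k : ℕ) :
    layerWeight p (insert x V) (k + 1) =
      (1 - p x) * layerWeight p V (k + 1) + p x * layerWeight p V k := by
  rw [layerWeight, sum_cubeWeight_insert hx, nonMemberSubfamily_powersetCard_insert hx,
    memberSubfamily_powersetCard_insert hx, layerWeight, layerWeight]

lemma layerWeight_mul_le_mul (hp : ∀ j, 0 < p j ∧ p j < 1)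
    (hlc : ∀ k, layerWeight p V k * layerWeight p V (k + 2) ≤ layerWeight p V (k + 1) ^ 2)
    (k : ℕ) :
    layerWeight p V k * layerWeight p V (k + 3) ≤
      layerWeight p V (k + 1) * layerWeight p V (k + 2) := by
  rcases lt_or_ge V.card (k + 3) with hk | hk
  · rw [layerWeight_eq_zero hk, mul_zero]
    exact mul_nonneg (layerWeight_nonneg hp V _) (layerWeight_nonneg hp V _)
  · exact mul_le_mul_of_mul_le_sq (layerWeight_pos hp (by omega))
      (layerWeight_pos hp (by omega)) (layerWeight_nonneg hp V _) (hlc k) (hlc (k + 1))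

lemma layerWeight_mul_le_sq (hp : ∀ j, 0 < p j ∧ p j < 1) (V : Finset α) (k : ℕ) :
    layerWeight p V k * layerWeight p V (k + 2) ≤ layerWeight p V (k + 1) ^ 2 := by
  induction V using Finset.induction_on generalizing k with
  | empty =>
    rw [layerWeight_eq_zero (k := k + 2) (by simp), mul_zero]
    positivity
  | @insert x V hx ih =>
    have hq : 0 ≤ 1 - p x := by linarith [hp x]
    have hr : 0 ≤ p x := (hp x).1.le
    cases k with
    | zero =>
      rw [layerWeight_insert_zero hx, layerWeight_insert_succ hx 1, layerWeight_insert_succ hx 0]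
      simpa using mix_mul_mix_le_sq (a := 0) hq hr (by simpa using sq_nonneg _) (ih 0)
        (by simpa using mul_nonneg (layerWeight_nonneg hp V 0) (layerWeight_nonneg hp V 1))
    | succ k =>
      rw [layerWeight_insert_succ hx k, layerWeight_insert_succ hx (k + 1),
        layerWeight_insert_succ hx (k + 2)]
      exact mix_mul_mix_le_sq hq hr (ih k) (ih (k + 1)) (layerWeight_mul_le_mul hp ih k)

lemma upperLayer_mono (h : S ⊆ T) : upperLayer V k S ⊆ upperLayer V k T := by
  intro t ht
  obtain ⟨ht, s, hs, hst⟩ := mem_filter.1 ht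
  exact mem_filter.2 ⟨ht, s, h hs, hst⟩

lemma upperLayer_upperLayer_subset (j : ℕ) :
    upperLayer V k (upperLayer V j S) ⊆ upperLayer V k S := by
  intro t ht
  obtain ⟨ht, u, hu, hut⟩ := mem_filter.1 ht
  obtain ⟨-, s, hs, hsu⟩ := mem_filter.1 hu
  exact mem_filter.2 ⟨ht, s, hs, hsu.trans hut⟩

lemma upperLayer_nonMemberSubfamily_subset (hx : x ∉ V) :
    upperLayer V k (S.nonMemberSubfamily x) ⊆
      (upperLayer (insert x V) k S).nonMemberSubfamily x := by
  intro t ht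
  simp only [upperLayer, mem_nonMemberSubfamily, mem_filter, mem_powersetCard] at ht ⊢
  obtain ⟨⟨htV, ht⟩, s, ⟨hs, -⟩, hst⟩ := ht
  exact ⟨⟨⟨htV.trans (subset_insert x V), ht⟩, s, hs, hst⟩, fun h => hx (htV h)⟩

lemma union_upperLayer_memberSubfamily_subset (hx : x ∉ V)
    (hS : S ⊆ powersetCard k (insert x V)) :
    S.nonMemberSubfamily x ∪ upperLayer V k (S.memberSubfamily x) ⊆
      (upperLayer (insert x V) (k + 1) S).memberSubfamily x := by
  intro t ht
  simp only [upperLayer, mem_union, mem_nonMemberSubfamily, mem_memberSubfamily,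
    mem_filter, mem_powersetCard] at ht ⊢
  rcases ht with ⟨htS, hxt⟩ | ⟨⟨htV, ht⟩, s, ⟨hs, -⟩, hst⟩
  · obtain ⟨htV, ht⟩ := mem_powersetCard.1 (hS htS)
    exact ⟨⟨⟨insert_subset (mem_insert_self x V) htV, by rw [card_insert_of_notMem hxt, ht]⟩,
      t, htS, subset_insert x t⟩, hxt⟩
  · have hxt : x ∉ t := fun h => hx (htV h)
    exact ⟨⟨⟨insert_subset_insert x htV, by rw [card_insert_of_notMem hxt, ht]⟩,
      insert x s, hs, insert_subset_insert x hst⟩, hxt⟩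

-- `μ S / W k ≤ μ (∇S) / W (k + 1)` with the denominators cleared, so that it also holds, trivially,
-- beyond the top layer where `W` vanishes.
def HasNormalizedMatching (p : α → ℝ) (V : Finset α) : Prop :=
  ∀ k, ∀ S ⊆ V.powersetCard k,
    layerWeight p V (k + 1) * ∑ s ∈ S, cubeWeight p V s ≤
      layerWeight p V k * ∑ t ∈ upperLayer V (k + 1) S, cubeWeight p V t

lemma hasNormalizedMatching_empty (hp : ∀ j, 0 < p j ∧ p j < 1) :
    HasNormalizedMatching p (∅ : Finset α) := fun k S _ => by
  rw [layerWeight_eq_zero (by simp), zero_mul]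
  exact mul_nonneg (layerWeight_nonneg hp _ _) (sum_cubeWeight_nonneg hp _ _)

lemma normalizedMatching_zero (hS : S ⊆ V.powersetCard 0) :
    layerWeight p V 1 * ∑ s ∈ S, cubeWeight p V s ≤
      layerWeight p V 0 * ∑ t ∈ upperLayer V 1 S, cubeWeight p V t := by
  rw [powersetCard_zero] at hS
  rcases subset_singleton_iff.1 hS with rfl | rfl
  · simp [upperLayer]
  · have hup : upperLayer V 1 {∅} = V.powersetCard 1 :=
      filter_true_of_mem fun t _ => ⟨∅, mem_singleton_self ∅, empty_subset t⟩
    rw [hup, sum_singleton, mul_comm]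
    simp [layerWeight]

-- The `q * r` coefficient in the proof of `HasNormalizedMatching.insert`; it needs log-concavity.
lemma HasNormalizedMatching.cross_term (hp : ∀ j, 0 < p j ∧ p j < 1)
    (h : HasNormalizedMatching p V) {m : ℕ} {S₀ S₁ : Finset (Finset α)}
    (hS₀ : S₀ ⊆ V.powersetCard (m + 1)) (hS₁ : S₁ ⊆ V.powersetCard m) :
    layerWeight p V (m + 2) * ∑ s ∈ S₁, cubeWeight p V s +
        layerWeight p V (m + 1) * ∑ s ∈ S₀, cubeWeight p V s ≤
      layerWeight p V (m + 1) * ∑ t ∈ S₀ ∪ upperLayer V (m + 1) S₁, cubeWeight p V t +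
        layerWeight p V m * ∑ t ∈ upperLayer V (m + 2) S₀, cubeWeight p V t := by
  set U := upperLayer V (m + 1) S₁
  set μ : Finset (Finset α) → ℝ := fun S => ∑ s ∈ S, cubeWeight p V s
  have hunion : μ (S₀ ∪ U) + μ (S₀ ∩ U) = μ S₀ + μ U := sum_union_inter
  have hS₁U : layerWeight p V (m + 1) * μ S₁ ≤ layerWeight p V m * μ U := h m S₁ hS₁
  have hinter : layerWeight p V (m + 2) * μ (S₀ ∩ U) ≤
      layerWeight p V (m + 1) * μ (upperLayer V (m + 2) S₀) :=
    (h (m + 1) _ (inter_subset_left.trans hS₀)).trans <| mul_le_mul_of_nonneg_left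
      (sum_cubeWeight_mono hp V (upperLayer_mono inter_subset_left)) (layerWeight_nonneg hp V _)
  have hUinter : μ (S₀ ∩ U) ≤ μ U := sum_cubeWeight_mono hp V inter_subset_right
  have hW₀ := layerWeight_nonneg hp V m
  have hW₁ := layerWeight_nonneg hp V (m + 1)
  have hb₀ := sum_cubeWeight_nonneg hp V (upperLayer V (m + 2) S₀)
  suffices layerWeight p V (m + 2) * μ S₁ ≤
      layerWeight p V (m + 1) * (μ U - μ (S₀ ∩ U)) +
        layerWeight p V m * μ (upperLayer V (m + 2) S₀) by
    change _ * μ S₁ + _ * μ S₀ ≤ _ * μ (S₀ ∪ U) + _ * μ (upperLayer V (m + 2) S₀)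
    rw [show μ (S₀ ∪ U) = μ S₀ + (μ U - μ (S₀ ∩ U)) by linarith]
    linarith
  rcases lt_or_ge V.card (m + 2) with hm | hm
  · rw [layerWeight_eq_zero hm, zero_mul]
    exact add_nonneg (mul_nonneg hW₁ (sub_nonneg.2 hUinter)) (mul_nonneg hW₀ hb₀)
  · refine le_of_mul_le_mul_left ?_ (layerWeight_pos hp (V := V) (k := m + 1) (by omega))
    have hlc := layerWeight_mul_le_sq hp V m
    calc layerWeight p V (m + 1) * (layerWeight p V (m + 2) * μ S₁)
        ≤ layerWeight p V (m + 2) * (layerWeight p V m * μ U) := by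
          rw [mul_left_comm]
          exact mul_le_mul_of_nonneg_left hS₁U (layerWeight_nonneg hp V _)
      _ = layerWeight p V m * layerWeight p V (m + 2) * (μ U - μ (S₀ ∩ U)) +
            layerWeight p V m * (layerWeight p V (m + 2) * μ (S₀ ∩ U)) := by ring
      _ ≤ layerWeight p V (m + 1) ^ 2 * (μ U - μ (S₀ ∩ U)) +
            layerWeight p V m * (layerWeight p V (m + 1) * μ (upperLayer V (m + 2) S₀)) := by
          gcongr
      _ = layerWeight p V (m + 1) * (layerWeight p V (m + 1) * (μ U - μ (S₀ ∩ U)) +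
            layerWeight p V m * μ (upperLayer V (m + 2) S₀)) := by ring

lemma HasNormalizedMatching.insert (hp : ∀ j, 0 < p j ∧ p j < 1) (hx : x ∉ V)
    (h : HasNormalizedMatching p V) : HasNormalizedMatching p (insert x V) := by
  rintro (_ | m) S hS
  · exact normalizedMatching_zero hS
  have hS₀ : S.nonMemberSubfamily x ⊆ V.powersetCard (m + 1) := by
    rw [← nonMemberSubfamily_powersetCard_insert hx]
    exact filter_subset_filter _ hS
  have hS₁ : S.memberSubfamily x ⊆ V.powersetCard m := by
    rw [← memberSubfamily_powersetCard_insert hx]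
    exact memberSubfamily_mono x hS
  have hq : 0 ≤ 1 - p x := by linarith [hp x]
  have hr : 0 ≤ p x := (hp x).1.le
  rw [sum_cubeWeight_insert hx S, sum_cubeWeight_insert hx, layerWeight_insert_succ hx (m + 1),
    layerWeight_insert_succ hx m]
  refine (mix_mul_mix_le hq hr (h (m + 1) _ hS₀) ((h m _ hS₁).trans ?_)
    (h.cross_term hp hS₀ hS₁)).trans ?_
  · exact mul_le_mul_of_nonneg_left (sum_cubeWeight_mono hp V subset_union_right)
      (layerWeight_nonneg hp V m)
  · refine mul_le_mul_of_nonneg_left (add_le_add ?_ ?_) ?_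
    · exact mul_le_mul_of_nonneg_left
        (sum_cubeWeight_mono hp V (upperLayer_nonMemberSubfamily_subset hx)) hq
    · exact mul_le_mul_of_nonneg_left
        (sum_cubeWeight_mono hp V (union_upperLayer_memberSubfamily_subset hx hS)) hr
    · exact add_nonneg (mul_nonneg hq (layerWeight_nonneg hp V _))
        (mul_nonneg hr (layerWeight_nonneg hp V _))

lemma hasNormalizedMatching (hp : ∀ j, 0 < p j ∧ p j < 1) (V : Finset α) :
    HasNormalizedMatching p V := by
  induction V using Finset.induction_on with
  | empty => exact hasNormalizedMatching_empty hp
  | @insert x V hx ih => exact ih.insert hp hx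

lemma disjoint_upperLayer_upperLayer {A : Finset (Finset α)}
    (hA : IsAntichain (· ⊆ ·) (A : Set (Finset α))) :
    Disjoint (upperLayer V (k + 1) (upperLayer V k A)) {s ∈ A | #s = k + 1} := by
  refine disjoint_left.2 fun t ht htA => ?_
  obtain ⟨-, u, hu, hut⟩ := mem_filter.1 ht
  obtain ⟨hu, s, hs, hsu⟩ := mem_filter.1 hu
  obtain ⟨htA, ht⟩ := mem_filter.1 htA
  have hsk : #s ≤ k := (card_le_card hsu).trans_eq (mem_powersetCard.1 hu).2
  exact hA hs htA (by rintro rfl; omega) (hsu.trans hut)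

section Cube

variable [Fintype α] {A : Finset (Finset α)}

lemma filter_card_eq_subset_upperLayer (A : Finset (Finset α)) (k : ℕ) :
    {s ∈ A | #s = k} ⊆ upperLayer univ k A := fun s hs =>
  mem_filter.2 ⟨mem_powersetCard_univ.2 (mem_filter.1 hs).2, s, (mem_filter.1 hs).1, subset_rfl⟩

lemma sum_div_layerWeight_le (hp : ∀ j, 0 < p j ∧ p j < 1)
    (hA : IsAntichain (· ⊆ ·) (A : Set (Finset α))) {ℓ : ℕ} (hℓ : ℓ ≤ Fintype.card α) :
    ∑ k ∈ range (ℓ + 1), (∑ s ∈ A with #s = k, cubeWeight p univ s) / layerWeight p univ k ≤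
      (∑ t ∈ upperLayer univ ℓ A, cubeWeight p univ t) / layerWeight p univ ℓ := by
  induction ℓ with
  | zero =>
    rw [sum_range_one]
    exact div_le_div_of_nonneg_right
      (sum_cubeWeight_mono hp univ (filter_card_eq_subset_upperLayer A 0))
      (layerWeight_nonneg hp univ 0)
  | succ ℓ ih =>
    set N := upperLayer univ ℓ A
    have hW : 0 < layerWeight p univ ℓ := layerWeight_pos hp (by simp; omega)
    have hW' : 0 < layerWeight p univ (ℓ + 1) := layerWeight_pos hp (by simpa using hℓ)
    have hmatch := hasNormalizedMatching hp univ ℓ N (filter_subset _ _)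
    have hsub : upperLayer univ (ℓ + 1) N ∪ {s ∈ A | #s = ℓ + 1} ⊆ upperLayer univ (ℓ + 1) A :=
      union_subset (upperLayer_upperLayer_subset ℓ) (filter_card_eq_subset_upperLayer A _)
    rw [sum_range_succ]
    calc _ ≤ (∑ t ∈ N, cubeWeight p univ t) / layerWeight p univ ℓ +
          (∑ s ∈ A with #s = ℓ + 1, cubeWeight p univ s) / layerWeight p univ (ℓ + 1) :=
          add_le_add_left (ih (by omega)) _
      _ ≤ (∑ t ∈ upperLayer univ (ℓ + 1) N, cubeWeight p univ t) / layerWeight p univ (ℓ + 1) +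
          (∑ s ∈ A with #s = ℓ + 1, cubeWeight p univ s) / layerWeight p univ (ℓ + 1) := by
        gcongr ?_ + _
        rw [div_le_div_iff₀ hW hW']
        linarith
      _ = (∑ t ∈ upperLayer univ (ℓ + 1) N ∪ {s ∈ A | #s = ℓ + 1}, cubeWeight p univ t) /
          layerWeight p univ (ℓ + 1) := by
        rw [sum_union (disjoint_upperLayer_upperLayer hA), add_div]
      _ ≤ _ := div_le_div_of_nonneg_right (sum_cubeWeight_mono hp univ hsub) hW'.le

lemma sum_div_layerWeight_le_one (hp : ∀ j, 0 < p j ∧ p j < 1)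
    (hA : IsAntichain (· ⊆ ·) (A : Set (Finset α))) :
    ∑ k ∈ range (Fintype.card α + 1),
      (∑ s ∈ A with #s = k, cubeWeight p univ s) / layerWeight p univ k ≤ 1 :=
  (sum_div_layerWeight_le hp hA le_rfl).trans <|
    div_le_one_of_le₀ (sum_cubeWeight_mono hp univ (filter_subset _ _))
      (layerWeight_nonneg hp univ _)

lemma sum_cubeWeight_le_of_isAntichain (hp : ∀ j, 0 < p j ∧ p j < 1)
    (hA : IsAntichain (· ⊆ ·) (A : Set (Finset α))) {M : ℝ}
    (hM : ∀ k ≤ Fintype.card α, layerWeight p univ k ≤ M) :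
    ∑ s ∈ A, cubeWeight p univ s ≤ M := by
  have hmaps : ∀ s ∈ A, #s ∈ range (Fintype.card α + 1) :=
    fun s _ => mem_range.2 (Nat.lt_succ_of_le (card_le_univ s))
  have hM₀ : 0 ≤ M := (layerWeight_nonneg hp univ 0).trans (hM 0 (Nat.zero_le _))
  rw [← sum_fiberwise_of_maps_to hmaps]
  calc ∑ k ∈ range (Fintype.card α + 1), ∑ s ∈ A with #s = k, cubeWeight p univ s
      = ∑ k ∈ range (Fintype.card α + 1),
          (∑ s ∈ A with #s = k, cubeWeight p univ s) / layerWeight p univ k *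
            layerWeight p univ k := by
        refine sum_congr rfl fun k hk => (div_mul_cancel₀ _ (layerWeight_pos hp ?_).ne').symm
        simpa [Nat.lt_succ_iff] using hk
    _ ≤ ∑ k ∈ range (Fintype.card α + 1),
          (∑ s ∈ A with #s = k, cubeWeight p univ s) / layerWeight p univ k * M := by
        refine sum_le_sum fun k hk => mul_le_mul_of_nonneg_left (hM k ?_) ?_
        · exact Nat.lt_succ_iff.1 (mem_range.1 hk)
        · exact div_nonneg (sum_cubeWeight_nonneg hp univ _) (layerWeight_nonneg hp univ k)
    _ ≤ M := by
        rw [← sum_mul]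
        exact mul_le_of_le_one_left hM₀ (sum_div_layerWeight_le_one hp hA)

end Cube

end ProductSperner

open ProductSperner in
/-- **Sperner's theorem for product measures.**  If `P` is a non-trivial product
distribution on `{0,1}^n` and `A` is an antichain, then
`Pr[z ∈ A] ≤ max_ℓ Pr[|z| = ℓ]`. -/
theorem sperner_product_measure (n : ℕ) (p : Fin n → ℝ)
    (hp : ∀ j, 0 < p j ∧ p j < 1)
    (A : Finset (Finset (Fin n)))
    (hA : IsAntichain (· ⊆ ·) (A : Set (Finset (Fin n)))) :
    ∑ s ∈ A, prodWeight p s ≤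
      (Finset.range (n + 1)).sup' Finset.nonempty_range_add_one
        (fun ℓ => ∑ s ∈ Finset.univ.filter (fun s : Finset (Fin n) => s.card = ℓ),
          prodWeight p s) := by
  have hweight (s : Finset (Fin n)) : prodWeight p s = cubeWeight p univ s := by
    rw [prodWeight, cubeWeight, prod_ite, filter_univ_mem]
    congr 2
    ext
    simp
  simp only [hweight, univ_filter_card_eq]
  refine sum_cubeWeight_le_of_isAntichain hp hA fun k hk => ?_
  exact le_sup' (fun ℓ => layerWeight p univ ℓ) (mem_range.2 (by simpa [Nat.lt_succ_iff] using hk))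
end

section
/- Let P be a non-trivial product distribution on {0,1}^n (independent coordinates with 0 < p_j = Pr[z_j = 1] < 1 for all j). If A ⊆ {0,1}^n is an antichain with respect to the coordinatewise partial order, then the sum over ℓ ∈ {0,1,...,n} of the conditional probabilities Pr_{z∼P}[z ∈ A | |z| = ℓ] is at most 1. -/
/-!
Replace `1 - p j` by an arbitrary positive weight `q j` and induct on the ground set. Passing from
`E` to `insert a E`, a set `s ⊆ E` keeps its conditional weight within its level up to the factor
`g #s`, where `g ℓ = notMemRatio p q E a ℓ` is the share of level `ℓ` avoiding `a`, and
`insert a s` keeps it up to the factor `1 - g (#s + 1)`. Newton's inequality for the level masses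
makes `g` decrease from `g 0 = 1` to `g (#E + 1) = 0`. Writing both factors as sums of the
increments `g k - g (k + 1) ≥ 0` turns the sum over an antichain `A` into an average over
thresholds `k` of the sums over the antichains `{s ∈ A | a ∉ s, #s ≤ k} ∪ {u | a ∉ u,
insert a u ∈ A, k ≤ #u}` of subsets of `E`, each at most `1` by induction.
-/

open Finset

variable {ι : Type*} [DecidableEq ι] (p q : ι → ℝ)

def subsetWeight (E s : Finset ι) : ℝ :=
  (∏ j ∈ s, p j) * ∏ j ∈ E \ s, q j

def levelMass (E : Finset ι) (ℓ : ℕ) : ℝ :=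
  ∑ s ∈ E.powersetCard ℓ, subsetWeight p q E s

noncomputable def condWeight (E s : Finset ι) : ℝ :=
  subsetWeight p q E s / levelMass p q E #s

noncomputable def notMemRatio (E : Finset ι) (a : ι) (ℓ : ℕ) : ℝ :=
  q a * levelMass p q E ℓ / levelMass p q (insert a E) ℓ

variable {p q}

section Weights

variable {E s : Finset ι} {a : ι}

theorem subsetWeight_nonneg (hp : ∀ j, 0 ≤ p j) (hq : ∀ j, 0 ≤ q j) (E s : Finset ι) :
    0 ≤ subsetWeight p q E s :=
  mul_nonneg (prod_nonneg fun j _ => hp j) (prod_nonneg fun j _ => hq j)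

theorem subsetWeight_pos (hp : ∀ j, 0 < p j) (hq : ∀ j, 0 < q j) (E s : Finset ι) :
    0 < subsetWeight p q E s :=
  mul_pos (prod_pos fun j _ => hp j) (prod_pos fun j _ => hq j)

theorem subsetWeight_insert_of_subset (ha : a ∉ E) (hs : s ⊆ E) :
    subsetWeight p q (insert a E) s = q a * subsetWeight p q E s := by
  rw [subsetWeight, subsetWeight, insert_sdiff_of_notMem _ (notMem_mono hs ha),
    prod_insert fun h => ha (mem_sdiff.1 h).1]
  ring

theorem subsetWeight_insert_insert (ha : a ∉ E) (hs : s ⊆ E) :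
    subsetWeight p q (insert a E) (insert a s) = p a * subsetWeight p q E s := by
  rw [subsetWeight, subsetWeight, insert_sdiff_insert, sdiff_insert_of_notMem ha,
    prod_insert (notMem_mono hs ha)]
  ring

theorem levelMass_nonneg (hp : ∀ j, 0 ≤ p j) (hq : ∀ j, 0 ≤ q j) (E : Finset ι) (ℓ : ℕ) :
    0 ≤ levelMass p q E ℓ :=
  sum_nonneg fun s _ => subsetWeight_nonneg hp hq E s

theorem levelMass_pos (hp : ∀ j, 0 < p j) (hq : ∀ j, 0 < q j) {ℓ : ℕ} (hℓ : ℓ ≤ #E) :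
    0 < levelMass p q E ℓ :=
  sum_pos (fun s _ => subsetWeight_pos hp hq E s) (powersetCard_nonempty.2 hℓ)

theorem levelMass_of_card_lt {ℓ : ℕ} (hℓ : #E < ℓ) : levelMass p q E ℓ = 0 := by
  rw [levelMass, powersetCard_eq_empty.2 hℓ, sum_empty]

theorem levelMass_insert_zero (ha : a ∉ E) :
    levelMass p q (insert a E) 0 = q a * levelMass p q E 0 := by
  simp only [levelMass, powersetCard_zero, sum_singleton,
    subsetWeight_insert_of_subset ha (empty_subset E)]

theorem levelMass_insert_succ (ha : a ∉ E) (ℓ : ℕ) :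
    levelMass p q (insert a E) (ℓ + 1) =
      q a * levelMass p q E (ℓ + 1) + p a * levelMass p q E ℓ := by
  have hsub : ∀ {k}, ∀ s ∈ E.powersetCard k, s ⊆ E := fun s hs => (mem_powersetCard.1 hs).1
  have hdisj : Disjoint (E.powersetCard (ℓ + 1)) ((E.powersetCard ℓ).image (insert a)) :=
    disjoint_left.2 fun s hs hs' => by
      obtain ⟨t, -, rfl⟩ := mem_image.1 hs'
      exact ha (hsub _ hs (mem_insert_self a t))
  have hinj : Set.InjOn (insert a) (E.powersetCard ℓ : Set (Finset ι)) :=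
    fun s hs t ht hst => by
      rw [← erase_insert (notMem_mono (hsub s hs) ha), hst,
        erase_insert (notMem_mono (hsub t ht) ha)]
  rw [levelMass, powersetCard_succ_insert ha, sum_union hdisj, sum_image hinj, levelMass,
    levelMass, mul_sum, mul_sum]
  congr 1 <;> refine sum_congr rfl fun s hs => ?_
  · exact subsetWeight_insert_of_subset ha (hsub s hs)
  · exact subsetWeight_insert_insert ha (hsub s hs)

/- Newton's inequality in ratio form for all `i ≤ j`, not just `j = i + 1`: the cross terms of
the induction step need it at `(i, j + 1)` and `(i + 1, j)`. -/
theorem levelMass_mul_le_mul (hp : ∀ j, 0 ≤ p j) (hq : ∀ j, 0 ≤ q j) (E : Finset ι) :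
    ∀ ⦃i j : ℕ⦄, i ≤ j →
      levelMass p q E i * levelMass p q E (j + 1) ≤
        levelMass p q E (i + 1) * levelMass p q E j := by
  induction E using Finset.induction_on with
  | empty =>
    intro i j _
    rw [levelMass_of_card_lt (ℓ := j + 1) (by simp), mul_zero]
    exact mul_nonneg (levelMass_nonneg hp hq _ _) (levelMass_nonneg hp hq _ _)
  | @insert a E ha ih =>
    intro i j hij
    set L := levelMass p q E
    have hL := levelMass_nonneg hp hq E
    have hpq := mul_nonneg (hp a) (hq a)
    rcases i with _ | i <;> rcases j with _ | j
    · simp only [levelMass_insert_zero ha, zero_add, levelMass_insert_succ ha]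
      exact (mul_comm _ _).le
    · simp only [levelMass_insert_zero ha, zero_add, levelMass_insert_succ ha]
      nlinarith [mul_le_mul_of_nonneg_left (ih (Nat.zero_le (j + 1))) (mul_nonneg (hq a) (hq a)),
        mul_nonneg hpq (mul_nonneg (hL 1) (hL j)),
        mul_nonneg (mul_nonneg (hp a) (hp a)) (mul_nonneg (hL 0) (hL j))]
    · omega
    · have cross : L i * L (j + 2) ≤ L (i + 2) * L j := by
        rcases (Nat.succ_le_succ_iff.1 hij).eq_or_lt with rfl | hlt
        · rw [mul_comm]
        · exact (ih (by omega)).trans (ih hlt)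
      simp only [levelMass_insert_succ ha]
      nlinarith [mul_le_mul_of_nonneg_left (ih hij) (mul_nonneg (hq a) (hq a)),
        mul_le_mul_of_nonneg_left (ih (Nat.succ_le_succ_iff.1 hij)) (mul_nonneg (hp a) (hp a)),
        mul_le_mul_of_nonneg_left cross hpq]

end Weights

section Ratios

variable {E s : Finset ι} {a : ι}

theorem notMemRatio_zero (hp : ∀ j, 0 < p j) (hq : ∀ j, 0 < q j) (ha : a ∉ E) :
    notMemRatio p q E a 0 = 1 := by
  rw [notMemRatio, levelMass_insert_zero ha]
  exact div_self (mul_pos (hq a) (levelMass_pos hp hq (Nat.zero_le _))).ne'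

theorem notMemRatio_of_card_lt {ℓ : ℕ} (hℓ : #E < ℓ) : notMemRatio p q E a ℓ = 0 := by
  rw [notMemRatio, levelMass_of_card_lt hℓ, mul_zero, zero_div]

theorem notMemRatio_antitone (hp : ∀ j, 0 < p j) (hq : ∀ j, 0 < q j) (ha : a ∉ E) :
    Antitone (notMemRatio p q E a) := by
  have hL := levelMass_nonneg (fun j => (hp j).le) (fun j => (hq j).le)
  have hL' : ∀ ℓ ≤ #E + 1, 0 < levelMass p q (insert a E) ℓ := fun ℓ hℓ =>
    levelMass_pos hp hq (by rwa [card_insert_of_notMem ha])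
  have hpq := mul_pos (hp a) (hq a)
  refine antitone_nat_of_succ_le fun ℓ => ?_
  rcases le_or_gt (ℓ + 1) #E with hℓ | hℓ
  · rw [notMemRatio, notMemRatio, div_le_div_iff₀ (hL' _ (by omega)) (hL' _ (by omega)),
      levelMass_insert_succ ha]
    rcases ℓ with _ | ℓ
    · rw [levelMass_insert_zero ha]
      nlinarith [mul_nonneg hpq.le (mul_nonneg (hq a).le (mul_nonneg (hL E 0) (hL E 0)))]
    · rw [levelMass_insert_succ ha]
      nlinarith [mul_le_mul_of_nonneg_left
        (levelMass_mul_le_mul (fun j => (hp j).le) (fun j => (hq j).le) E (Nat.le_add_right ℓ 1))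
        hpq.le]
  · rw [notMemRatio_of_card_lt hℓ]
    exact div_nonneg (mul_nonneg (hq a).le (hL E ℓ)) (hL _ ℓ)

theorem condWeight_insert_of_subset (hp : ∀ j, 0 < p j) (hq : ∀ j, 0 < q j) (ha : a ∉ E)
    (hs : s ⊆ E) :
    condWeight p q (insert a E) s = condWeight p q E s * notMemRatio p q E a #s := by
  have := (levelMass_pos hp hq (card_le_card hs)).ne'
  rw [condWeight, condWeight, notMemRatio, subsetWeight_insert_of_subset ha hs]
  field_simp

theorem condWeight_insert_insert (hp : ∀ j, 0 < p j) (hq : ∀ j, 0 < q j) (ha : a ∉ E)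
    (hs : s ⊆ E) :
    condWeight p q (insert a E) (insert a s) =
      condWeight p q E s * (1 - notMemRatio p q E a (#s + 1)) := by
  have h₀ := (levelMass_pos hp hq (card_le_card hs)).ne'
  have h₁ := (levelMass_pos hp hq (E := insert a E) (ℓ := #s + 1) (by
    rw [card_insert_of_notMem ha]; exact Nat.succ_le_succ (card_le_card hs))).ne'
  rw [condWeight, condWeight, notMemRatio, subsetWeight_insert_insert ha hs,
    card_insert_of_notMem (notMem_mono hs ha)]
  rw [levelMass_insert_succ ha] at h₁ ⊢
  field_simp
  ring

end Ratios

theorem sum_mul_add_sum_mul_one_sub_le_one {α : Type*} {g : ℕ → ℝ} {N : ℕ} (hg : Antitone g)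
    (hg₀ : g 0 = 1) (hgN : g N = 0) {r : α → ℝ} {c : α → ℕ} {A₀ A₁ : Finset α}
    (h₀ : ∀ s ∈ A₀, c s < N) (h₁ : ∀ s ∈ A₁, c s < N)
    (hk : ∀ k < N, ∑ s ∈ A₀ with c s ≤ k, r s + ∑ s ∈ A₁ with k ≤ c s, r s ≤ 1) :
    ∑ s ∈ A₀, r s * g (c s) + ∑ s ∈ A₁, r s * (1 - g (c s + 1)) ≤ 1 := by
  set β : ℕ → ℝ := fun k => g k - g (k + 1)
  have hβ : ∀ k, 0 ≤ β k := fun k => sub_nonneg.2 (hg (Nat.le_succ k))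
  have hβ_sum : ∀ m, ∑ k ∈ range m, β k = g 0 - g m := sum_range_sub' g
  have hg_tail : ∀ m ≤ N, g m = ∑ k ∈ range N with m ≤ k, β k := fun m hm => by
    have hIco : {k ∈ range N | m ≤ k} = Ico m N := by ext; simp [and_comm]
    have := sum_range_add_sum_Ico β hm
    rw [hIco]
    linarith [hβ_sum m, hβ_sum N]
  have hg_head : ∀ m < N, 1 - g (m + 1) = ∑ k ∈ range N with k ≤ m, β k := fun m hm => by
    have hrange : {k ∈ range N | k ≤ m} = range (m + 1) := by
      ext; simp only [mem_filter, mem_range]; omega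
    rw [hrange, hβ_sum, hg₀]
  calc ∑ s ∈ A₀, r s * g (c s) + ∑ s ∈ A₁, r s * (1 - g (c s + 1))
      = ∑ s ∈ A₀, ∑ k ∈ range N with c s ≤ k, r s * β k
          + ∑ s ∈ A₁, ∑ k ∈ range N with k ≤ c s, r s * β k := by
        simp only [← mul_sum]
        congr 1 <;> refine sum_congr rfl fun s hs => ?_
        · rw [hg_tail _ (h₀ s hs).le]
        · rw [hg_head _ (h₁ s hs)]
    _ = ∑ k ∈ range N, (∑ s ∈ A₀ with c s ≤ k, r s + ∑ s ∈ A₁ with k ≤ c s, r s) * β k := by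
        rw [sum_comm' (t' := range N) (s' := fun k => {s ∈ A₀ | c s ≤ k})
            (by simp only [mem_filter, mem_range]; tauto),
          sum_comm' (t' := range N) (s' := fun k => {s ∈ A₁ | k ≤ c s})
            (by simp only [mem_filter, mem_range]; tauto),
          ← sum_add_distrib]
        simp only [add_mul, sum_mul]
    _ ≤ ∑ k ∈ range N, β k :=
        sum_le_sum fun k hk' => mul_le_of_le_one_left (hβ k) (hk k (mem_range.1 hk'))
    _ = 1 := by rw [hβ_sum, hg₀, hgN, sub_zero]

section Antichain

variable {A : Finset (Finset ι)} {a : ι}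

theorem sum_nonMemberSubfamily_add_sum_memberSubfamily {M : Type*} [AddCommMonoid M]
    (A : Finset (Finset ι)) (a : ι) (f : Finset ι → M) :
    ∑ s ∈ A.nonMemberSubfamily a, f s + ∑ s ∈ A.memberSubfamily a, f (insert a s) =
      ∑ s ∈ A, f s := by
  have hinj : Set.InjOn (insert a) (A.memberSubfamily a : Set (Finset ι)) :=
    fun s hs t ht hst => by
      rw [← erase_insert (mem_memberSubfamily.1 hs).2, hst,
        erase_insert (mem_memberSubfamily.1 ht).2]
  rw [← sum_image hinj, image_insert_memberSubfamily, nonMemberSubfamily,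
    sum_filter_not_add_sum_filter]

theorem IsAntichain.not_subset_of_mem_nonMemberSubfamily
    (hA : IsAntichain (· ⊆ ·) (A : Set (Finset ι))) {s u : Finset ι}
    (hs : s ∈ A.nonMemberSubfamily a) (hu : u ∈ A.memberSubfamily a) : ¬s ⊆ u := fun hsu => by
  rw [mem_nonMemberSubfamily] at hs
  rw [mem_memberSubfamily] at hu
  exact hA hs.1 hu.1 (ne_of_mem_of_not_mem' (mem_insert_self a u) hs.2).symm
    (hsu.trans (subset_insert a u))

theorem IsAntichain.memberSubfamily (hA : IsAntichain (· ⊆ ·) (A : Set (Finset ι))) (a : ι) :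
    IsAntichain (· ⊆ ·) (A.memberSubfamily a : Set (Finset ι)) := fun s hs t ht hst hsub => by
  rw [mem_coe, mem_memberSubfamily] at hs ht
  exact hA hs.1 ht.1 (fun h => hst (by rw [← erase_insert hs.2, h, erase_insert ht.2]))
    (insert_subset_insert a hsub)

theorem IsAntichain.nonMemberSubfamily_filter_union_memberSubfamily_filter
    (hA : IsAntichain (· ⊆ ·) (A : Set (Finset ι))) (a : ι) (k : ℕ) :
    IsAntichain (· ⊆ ·)
      (({s ∈ A.nonMemberSubfamily a | #s ≤ k} ∪ {u ∈ A.memberSubfamily a | k ≤ #u} :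
        Finset (Finset ι)) : Set (Finset ι)) := by
  rw [coe_union, isAntichain_union]
  refine ⟨(hA.subset (filter_subset _ _)).subset (filter_subset _ _),
    (hA.memberSubfamily a).subset (filter_subset _ _), fun s hs u hu hsu => ?_⟩
  rw [mem_coe, mem_filter] at hs hu
  exact ⟨hA.not_subset_of_mem_nonMemberSubfamily hs.1 hu.1,
    fun hus => hsu (eq_of_subset_of_card_le hus (hs.2.trans hu.2)).symm⟩

end Antichain

theorem sum_condWeight_le_one (hp : ∀ j, 0 < p j) (hq : ∀ j, 0 < q j) {E : Finset ι}
    {A : Finset (Finset ι)} (hAE : A ⊆ E.powerset)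
    (hA : IsAntichain (· ⊆ ·) (A : Set (Finset ι))) :
    ∑ s ∈ A, condWeight p q E s ≤ 1 := by
  induction E using Finset.induction_on generalizing A with
  | empty =>
    obtain rfl | rfl := subset_singleton_iff.1 (powerset_empty ▸ hAE) <;>
      simp [condWeight, subsetWeight, levelMass]
  | @insert a E ha ih =>
    have h₀ : A.nonMemberSubfamily a ⊆ E.powerset := fun s hs => by
      rw [mem_nonMemberSubfamily] at hs
      exact mem_powerset.2 ((subset_insert_iff_of_notMem hs.2).1 (mem_powerset.1 (hAE hs.1)))
    have h₁ : A.memberSubfamily a ⊆ E.powerset := fun s hs => by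
      rw [mem_memberSubfamily] at hs
      exact mem_powerset.2 ((insert_subset_insert_iff hs.2).1 (mem_powerset.1 (hAE hs.1)))
    have hcard : ∀ s ∈ E.powerset, #s < #E + 1 := fun s hs =>
      Nat.lt_succ_of_le (card_le_card (mem_powerset.1 hs))
    rw [← sum_nonMemberSubfamily_add_sum_memberSubfamily A a,
      sum_congr rfl fun s hs => condWeight_insert_of_subset hp hq ha (mem_powerset.1 (h₀ hs)),
      sum_congr rfl fun s hs => condWeight_insert_insert hp hq ha (mem_powerset.1 (h₁ hs))]
    refine sum_mul_add_sum_mul_one_sub_le_one (notMemRatio_antitone hp hq ha)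
      (notMemRatio_zero hp hq ha) (notMemRatio_of_card_lt (Nat.lt_succ_self _))
      (fun s hs => hcard s (h₀ hs)) (fun s hs => hcard s (h₁ hs)) fun k _ => ?_
    have hdisj : Disjoint (A.nonMemberSubfamily a) (A.memberSubfamily a) :=
      disjoint_left.2 fun s hs hs' => hA.not_subset_of_mem_nonMemberSubfamily hs hs' subset_rfl
    rw [← sum_union (hdisj.mono (filter_subset _ _) (filter_subset _ _))]
    exact ih (union_subset ((filter_subset _ _).trans h₀) ((filter_subset _ _).trans h₁))
      (hA.nonMemberSubfamily_filter_union_memberSubfamily_filter a k)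

/-- **LYM inequality for product measures.**  If `P` is a non-trivial product
distribution on `{0,1}^n` and `A` is an antichain, then
`∑_{ℓ=0}^n Pr[z ∈ A | |z| = ℓ] ≤ 1`. -/
theorem lym_product_measure (n : ℕ) (p : Fin n → ℝ)
    (hp : ∀ j, 0 < p j ∧ p j < 1)
    (A : Finset (Finset (Fin n)))
    (hA : IsAntichain (· ⊆ ·) (A : Set (Finset (Fin n)))) :
    ∑ ℓ ∈ Finset.range (n + 1),
      (∑ s ∈ A.filter (fun s => s.card = ℓ), prodWeight p s) /
        (∑ s ∈ Finset.univ.filter (fun s : Finset (Fin n) => s.card = ℓ),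
          prodWeight p s) ≤ 1 := by
  have hw : ∀ s, prodWeight p s = subsetWeight p (1 - p) univ s := fun s => by
    rw [prodWeight, subsetWeight, compl_eq_univ_sdiff]
    rfl
  calc _ = ∑ ℓ ∈ range (n + 1), ∑ s ∈ A with #s = ℓ, condWeight p (1 - p) univ s := by
        refine sum_congr rfl fun ℓ _ => ?_
        rw [univ_filter_card_eq, sum_div]
        refine sum_congr rfl fun s hs => ?_
        rw [condWeight, (mem_filter.1 hs).2, levelMass]
        simp only [hw]
    _ = ∑ s ∈ A, condWeight p (1 - p) univ s :=
        sum_fiberwise_of_maps_to (fun s _ => mem_range.2 (Nat.lt_succ_of_le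
          ((card_le_univ s).trans_eq (Fintype.card_fin n)))) _
    _ ≤ 1 := sum_condWeight_le_one (fun j => (hp j).1) (fun j => sub_pos.2 (hp j).2)
        (fun s _ => mem_powerset.2 (subset_univ s)) hA
end

section
/- Let q_1,...,q_n > 0 be real numbers and let ℓ ∈ {1,...,n-1}. For a subset s ⊆ [n] of size ℓ and an element j ∉ s, define h_{s,j} = Σ_{t ⊆ [n], |t| = ℓ, j ∉ t} (1/|(s ∪ {j}) \ t|) · Π_{a ∈ t} q_a. Then for every subset s ⊆ [n] with |s| = ℓ, Σ_{j ∉ s} q_j · h_{s,j} = g_{ℓ+1}(q), where g_{ℓ+1}(q) = Σ_{t' ⊆ [n], |t'| = ℓ+1} Π_{a ∈ t'} q_a is the elementary symmetric polynomial of degree ℓ+1. -/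
open Finset

/-- The elementary symmetric polynomial `g_ℓ(q) = ∑_{|t|=ℓ} ∏_{j∈t} q_j`. -/
def gpoly {n : ℕ} (q : Fin n → ℝ) (ℓ : ℕ) : ℝ :=
  ∑ t ∈ Finset.univ.filter (fun t : Finset (Fin n) => t.card = ℓ), ∏ a ∈ t, q a

/-- For `|s| = ℓ` and `j ∉ s`, the quantity
`h_{s,j} = ∑_{|t|=ℓ, j∉t} (1/|(s ∪ {j}) \ t|) ∏_{a ∈ t} q_a`. -/
noncomputable def hWeight {n : ℕ} (q : Fin n → ℝ) (ℓ : ℕ) (s : Finset (Fin n)) (j : Fin n) : ℝ :=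
  ∑ t ∈ Finset.univ.filter (fun t : Finset (Fin n) => t.card = ℓ ∧ j ∉ t),
    (1 / (((insert j s) \ t).card : ℝ)) * ∏ a ∈ t, q a

/-- For positive `q` and `|s| = ℓ` with `1 ≤ ℓ ≤ n-1`:
`∑_{j ∉ s} q_j h_{s,j} = g_{ℓ+1}(q)`. -/
theorem sum_q_hWeight_eq_gpoly_succ (n ℓ : ℕ) (hℓ : 1 ≤ ℓ) (hℓn : ℓ + 1 ≤ n)
    (q : Fin n → ℝ) (hq : ∀ j, 0 < q j)
    (s : Finset (Fin n)) (hs : s.card = ℓ) :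
    ∑ j ∈ sᶜ, q j * hWeight q ℓ s j = gpoly q (ℓ + 1) := by
  classical
  have R : gpoly q (ℓ + 1)
      = ∑ x ∈ ((univ.filter fun t' : Finset (Fin n) => t'.card = ℓ + 1).sigma
            fun t' => t' \ s),
          (1 / (((x.1 \ s).card : ℝ))) * ∏ a ∈ x.1, q a := by
    rw [Finset.sum_sigma, gpoly]
    apply Finset.sum_congr rfl
    intro t' ht'
    simp only [Finset.mem_filter] at ht'
    have hne : (t' \ s).Nonempty :=
      Finset.sdiff_nonempty.2 fun h => by have := Finset.card_le_card h; omega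
    dsimp only
    rw [Finset.sum_const, nsmul_eq_mul]
    have hc : ((t' \ s).card : ℝ) ≠ 0 := by
      exact_mod_cast Finset.card_ne_zero_of_mem hne.choose_spec
    field_simp
  rw [R]
  simp only [hWeight, Finset.mul_sum]
  rw [Finset.sum_sigma']
  apply Finset.sum_nbij' (fun x : Σ _ : Fin n, Finset (Fin n) => (⟨insert x.1 x.2, x.1⟩ : Σ _ : Finset (Fin n), Fin n))
    (fun y : Σ _ : Finset (Fin n), Fin n => (⟨y.2, y.1.erase y.2⟩ : Σ _ : Fin n, Finset (Fin n)))
  · rintro ⟨j, t⟩ hx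
    simp only [Finset.mem_sigma, Finset.mem_compl, Finset.mem_filter, Finset.mem_univ,
      true_and] at hx ⊢
    obtain ⟨hjs, htc, hjt⟩ := hx
    exact ⟨by rw [Finset.card_insert_of_notMem hjt, htc],
      Finset.mem_sdiff.2 ⟨Finset.mem_insert_self _ _, hjs⟩⟩
  · rintro ⟨t', j⟩ hy
    simp only [Finset.mem_sigma, Finset.mem_compl, Finset.mem_filter, Finset.mem_univ,
      true_and, Finset.mem_sdiff] at hy ⊢
    obtain ⟨htc, hjt, hjs⟩ := hy
    exact ⟨hjs, by rw [Finset.card_erase_of_mem hjt, htc]; rfl, Finset.notMem_erase _ _⟩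
  · rintro ⟨j, t⟩ hx
    simp only [Finset.mem_sigma, Finset.mem_compl, Finset.mem_filter, Finset.mem_univ,
      true_and] at hx
    simp [Finset.erase_insert hx.2.2]
  · rintro ⟨t', j⟩ hy
    simp only [Finset.mem_sigma, Finset.mem_filter, Finset.mem_univ, true_and,
      Finset.mem_sdiff] at hy
    simp [Finset.insert_erase hy.2.1]
  · rintro ⟨j, t⟩ hx
    simp only [Finset.mem_sigma, Finset.mem_compl, Finset.mem_filter, Finset.mem_univ,
      true_and] at hx
    obtain ⟨hjs, htc, hjt⟩ := hx
    have hcard : ((insert j s) \ t).card = ((insert j t) \ s).card := by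
      rw [Finset.insert_sdiff_of_notMem _ hjt, Finset.insert_sdiff_of_notMem _ hjs,
        Finset.card_insert_of_notMem (fun h => hjs (Finset.mem_sdiff.1 h).1),
        Finset.card_insert_of_notMem (fun h => hjt (Finset.mem_sdiff.1 h).1),
        Finset.card_sdiff_comm (hs.trans htc.symm)]
    rw [Finset.prod_insert hjt, hcard]
    ring
end

section
/- Let q_1,...,q_n > 0 be real numbers and let ℓ ∈ {1,...,n-1}. For a subset s ⊆ [n] of size ℓ and an element j ∉ s, define h_{s,j} = Σ_{t ⊆ [n], |t| = ℓ, j ∉ t} (1/|(s ∪ {j}) \ t|) · Π_{a ∈ t} q_a. Then for every subset s' ⊆ [n] with |s'| = ℓ+1, Σ_{j ∈ s'} h_{s' \ {j}, j} = g_ℓ(q), where g_ℓ(q) = Σ_{t ⊆ [n], |t| = ℓ} Π_{a ∈ t} q_a is the elementary symmetric polynomial of degree ℓ. -/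
open Finset

/-- For positive `q` and `|s'| = ℓ + 1` with `1 ≤ ℓ ≤ n-1`:
`∑_{j ∈ s'} h_{s' \ {j}, j} = g_ℓ(q)`. -/
theorem sum_hWeight_erase_eq_gpoly (n ℓ : ℕ) (hℓ : 1 ≤ ℓ) (hℓn : ℓ + 1 ≤ n)
    (q : Fin n → ℝ) (hq : ∀ j, 0 < q j)
    (s' : Finset (Fin n)) (hs' : s'.card = ℓ + 1) :
    ∑ j ∈ s', hWeight q ℓ (s'.erase j) j = gpoly q ℓ := by
  unfold hWeight gpoly
  have h1 : ∑ j ∈ s', ∑ t ∈ Finset.univ.filter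
      (fun t : Finset (Fin n) => t.card = ℓ ∧ j ∉ t),
      (1 / (((insert j (s'.erase j)) \ t).card : ℝ)) * ∏ a ∈ t, q a
      = ∑ j ∈ s', ∑ t ∈ Finset.univ.filter
      (fun t : Finset (Fin n) => t.card = ℓ ∧ j ∉ t),
      (1 / ((s' \ t).card : ℝ)) * ∏ a ∈ t, q a := by
    apply Finset.sum_congr rfl
    intro j hj
    rw [Finset.insert_erase hj]
  rw [h1]
  rw [Finset.sum_comm' (s' := fun t => s' \ t)
    (t' := Finset.univ.filter (fun t : Finset (Fin n) => t.card = ℓ))]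
  · apply Finset.sum_congr rfl
    intro t ht
    simp only [Finset.mem_filter] at ht
    have hne : (s' \ t).Nonempty := by
      rw [← Finset.card_pos]
      have := Finset.le_card_sdiff t s'
      omega
    have hc : (0 : ℝ) < ((s' \ t).card : ℝ) := by
      exact_mod_cast Finset.card_pos.mpr hne
    rw [Finset.sum_const, nsmul_eq_mul]
    field_simp
  · intro j t
    simp only [Finset.mem_filter, Finset.mem_sdiff, Finset.mem_univ, true_and]
    tauto
end

section
/- Let z_1,...,z_n be independent random variables, each taking values in {−1, +1}, with p_j = Pr[z_j = 1], and let σ² = Σ_{j=1}^n p_j(1−p_j) (so that 4σ² is the variance of Σ_j z_j). Then for every integer t, Pr[Σ_{j=1}^n z_j = t] ≤ ∫_0^1 exp(−2σ²·sin²(πθ)) dθ. -/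
/-!
Write `e(x) = exp(2πix)`. By orthogonality of the characters `θ ↦ e(mθ)` on `[0, 1]`, the total
weight of the sign patterns with exactly `k` plus-coordinates is the `k`-th Fourier coefficient of
`θ ↦ ∏ⱼ (pⱼ e(θ) + 1 - pⱼ)`, hence at most the integral of its modulus. Each factor has squared
modulus `1 - 4pⱼ(1-pⱼ) sin²(πθ) ≤ exp(-4pⱼ(1-pⱼ) sin²(πθ))`.
-/

open Finset

/-- The probability that independent `±1`-valued coordinates with `Pr[z_j = 1] = p_j`
produce exactly the sign pattern whose set of `+1` coordinates is `s`. -/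
def pmWeight {n : ℕ} (p : Fin n → ℝ) (s : Finset (Fin n)) : ℝ :=
  (∏ j ∈ s, p j) * ∏ j ∈ sᶜ, (1 - p j)

open Complex Real

theorem integral_exp_two_pi_I_int_mul (m : ℤ) :
    ∫ θ in (0:ℝ)..1, cexp (2 * π * I * m * θ) = if m = 0 then 1 else 0 := by
  split_ifs with hm
  · simp [hm]
  have hc : 2 * π * I * m ≠ 0 := by simp [hm, pi_ne_zero]
  have hperiod : cexp (2 * π * I * m) = 1 := by
    rw [show 2 * π * I * m = m * (2 * π * I) by ring]
    exact exp_int_mul_two_pi_mul_I m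
  simp [integral_exp_mul_complex hc, hperiod]

theorem integral_exp_neg_mul_sum_eq_sum_filter {ι : Type*} (S : Finset ι) (w : ι → ℂ)
    (f : ι → ℤ) (k : ℤ) :
    ∫ θ in (0:ℝ)..1, cexp (2 * π * I * (-k : ℤ) * θ) * ∑ i ∈ S, w i * cexp (2 * π * I * f i * θ)
      = ∑ i ∈ S with f i = k, w i := by
  have hterm : ∀ i, ∀ θ : ℝ, cexp (2 * π * I * (-k : ℤ) * θ) * (w i * cexp (2 * π * I * f i * θ))
      = w i * cexp (2 * π * I * (f i - k : ℤ) * θ) := by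
    intro i θ
    rw [mul_left_comm, ← Complex.exp_add]
    push_cast
    ring_nf
  simp_rw [mul_sum, hterm]
  rw [intervalIntegral.integral_finsetSum fun i _ =>
    Continuous.intervalIntegrable (by fun_prop) _ _, sum_filter]
  refine sum_congr rfl fun i _ => ?_
  rw [intervalIntegral.integral_const_mul, integral_exp_two_pi_I_int_mul]
  simp [sub_eq_zero]

theorem sum_filter_le_integral_norm_sum {ι : Type*} (S : Finset ι) (w : ι → ℝ) (f : ι → ℤ)
    (k : ℤ) :
    ∑ i ∈ S with f i = k, w i
      ≤ ∫ θ in (0:ℝ)..1, ‖∑ i ∈ S, (w i : ℂ) * cexp (2 * π * I * f i * θ)‖ := by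
  have hunit : ∀ θ : ℝ, ‖cexp (2 * π * I * (-k : ℤ) * θ)‖ = 1 := fun θ => by
    rw [norm_exp]; simp
  calc ∑ i ∈ S with f i = k, w i
      ≤ ‖∫ θ in (0:ℝ)..1, cexp (2 * π * I * (-k : ℤ) * θ) *
          ∑ i ∈ S, (w i : ℂ) * cexp (2 * π * I * f i * θ)‖ := by
        rw [integral_exp_neg_mul_sum_eq_sum_filter, ← ofReal_sum, norm_real]
        exact le_abs_self _
    _ ≤ _ := by
        refine (intervalIntegral.norm_integral_le_integral_norm zero_le_one).trans_eq ?_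
        simp_rw [norm_mul, hunit, one_mul]

theorem normSq_mul_exp_add_one_sub (p θ : ℝ) :
    normSq (p * cexp (2 * π * I * θ) + (1 - p))
      = 1 - 4 * (p * (1 - p)) * Real.sin (π * θ) ^ 2 := by
  have harg : 2 * π * I * θ = ((2 * (π * θ) : ℝ) : ℂ) * I := by push_cast; ring
  rw [harg, normSq_apply]
  simp only [add_re, add_im, mul_re, mul_im, exp_ofReal_mul_I_re, exp_ofReal_mul_I_im, ofReal_re,
    ofReal_im, sub_re, sub_im, one_re, one_im]
  rw [Real.cos_two_mul, Real.sin_two_mul]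
  linear_combination (4 * p ^ 2 * Real.cos (π * θ) ^ 2 + 4 * p - 4 * p ^ 2) *
    Real.sin_sq_add_cos_sq (π * θ)

theorem norm_mul_exp_add_one_sub_le (p θ : ℝ) :
    ‖p * cexp (2 * π * I * θ) + (1 - p)‖ ≤ rexp (-(2 * (p * (1 - p)) * Real.sin (π * θ) ^ 2)) := by
  rw [norm_def, normSq_mul_exp_add_one_sub, ← Real.sqrt_sq (exp_pos _).le, ← Real.exp_nat_mul]
  gcongr
  push_cast
  linarith [Real.add_one_le_exp (2 * -(2 * (p * (1 - p)) * Real.sin (π * θ) ^ 2))]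

theorem prod_mul_add_one_sub_eq_sum_pmWeight {n : ℕ} (p : Fin n → ℝ) (z : ℂ) :
    ∏ j, (p j * z + (1 - p j)) = ∑ s : Finset (Fin n), (pmWeight p s : ℂ) * z ^ s.card := by
  rw [prod_add, powerset_univ]
  refine sum_congr rfl fun s _ => ?_
  rw [prod_mul_distrib, prod_const, ← compl_eq_univ_sdiff, pmWeight]
  push_cast
  ring

theorem norm_prod_mul_exp_add_one_sub_le {n : ℕ} (p : Fin n → ℝ) (θ : ℝ) :
    ‖∏ j, (p j * cexp (2 * π * I * θ) + (1 - p j))‖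
      ≤ rexp (-(2 * (∑ j, p j * (1 - p j)) * Real.sin (π * θ) ^ 2)) := by
  rw [norm_prod, mul_sum, sum_mul, ← sum_neg_distrib, Real.exp_sum]
  exact prod_le_prod (fun _ _ => norm_nonneg _) fun j _ => norm_mul_exp_add_one_sub_le (p j) θ

theorem prob_sum_eq_le_integral_general (n : ℕ) (p : Fin n → ℝ) (t : ℤ) :
    ∑ s ∈ Finset.univ.filter
        (fun s : Finset (Fin n) => 2 * (s.card : ℤ) - (n : ℤ) = t), pmWeight p s
      ≤ ∫ θ in (0:ℝ)..1,
          Real.exp (-(2 * (∑ j, p j * (1 - p j)) * Real.sin (Real.pi * θ) ^ 2)) := by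
  by_cases hpar : ∃ k : ℤ, n + t = 2 * k
  · obtain ⟨k, hk⟩ := hpar
    have hfilter : (univ.filter fun s : Finset (Fin n) => 2 * (s.card : ℤ) - n = t)
        = univ.filter fun s => (s.card : ℤ) = k := by
      ext s; simp only [mem_filter, mem_univ, true_and]; omega
    have hgen : ∀ θ : ℝ,
        ∑ s : Finset (Fin n), (pmWeight p s : ℂ) * cexp (2 * π * I * (s.card : ℤ) * θ)
          = ∏ j, (p j * cexp (2 * π * I * θ) + (1 - p j)) := fun θ => by
      rw [prod_mul_add_one_sub_eq_sum_pmWeight]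
      refine sum_congr rfl fun s _ => ?_
      rw [← Complex.exp_nat_mul]
      push_cast
      ring_nf
    rw [hfilter]
    refine (sum_filter_le_integral_norm_sum _ _ (fun s : Finset (Fin n) => (s.card : ℤ)) k).trans
      ?_
    refine intervalIntegral.integral_mono_on zero_le_one
      (Continuous.intervalIntegrable (by fun_prop) _ _)
      (Continuous.intervalIntegrable (by fun_prop) _ _) fun θ _ => ?_
    rw [hgen]
    exact norm_prod_mul_exp_add_one_sub_le p θ
  · have hempty : (univ.filter fun s : Finset (Fin n) => 2 * (s.card : ℤ) - n = t) = ∅ :=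
      filter_eq_empty_iff.2 fun s _ hs => hpar ⟨s.card, by omega⟩
    rw [hempty, sum_empty]
    exact intervalIntegral.integral_nonneg zero_le_one fun θ _ => (exp_pos _).le

/-- For independent `±1`-valued random variables `z_1,…,z_n` with `Pr[z_j = 1] = p_j`
and `σ² = ∑_j p_j(1-p_j)`, for every integer `t`,
`Pr[∑_j z_j = t] ≤ ∫_0^1 exp(-2σ² sin²(πθ)) dθ`.
(The sum `∑_j z_j` equals `2|s| - n` where `s` is the set of `+1` coordinates.) -/
theorem prob_sum_eq_le_integral (n : ℕ) (p : Fin n → ℝ)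
    (hp : ∀ j, 0 ≤ p j ∧ p j ≤ 1) (t : ℤ) :
    ∑ s ∈ Finset.univ.filter
        (fun s : Finset (Fin n) => 2 * (s.card : ℤ) - (n : ℤ) = t), pmWeight p s
      ≤ ∫ θ in (0:ℝ)..1,
          Real.exp (-(2 * (∑ j, p j * (1 - p j)) * Real.sin (Real.pi * θ) ^ 2)) :=
  prob_sum_eq_le_integral_general n p t
end

section
/- There is an absolute constant C > 0 such that the following holds. Let z_1,...,z_n be independent random variables, each taking values in {−1, +1}, with p_j = Pr[z_j = 1], and let σ² = Σ_{j=1}^n p_j(1−p_j). If σ > 0, then for every integer t, Pr[Σ_{j=1}^n z_j = t] ≤ C/σ. -/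
/-!
By Fourier inversion on `[-π, π]`, `2π · Pr[#s = k] = ∫ e^{-ikψ} ∏_j (p_j e^{iψ} + 1 - p_j) dψ`.
Each factor satisfies `|p e^{iψ} + 1 - p|² = 1 - 2p(1-p)(1 - cos ψ) ≤ exp(-2p(1-p)(1 - cos ψ))`,
and `1 - cos ψ ≥ 2ψ²/π²` on `[-π, π]`, so the integrand is dominated by the Gaussian
`exp(-2σ²ψ²/π²)`, whose integral over `ℝ` is `π √(π/2) / σ`. Hence
`Pr[∑ z_j = t] ≤ √(π/8) / σ ≤ 1 / σ`.
-/

open Finset Real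

/-- `𝔼[exp(iψ·#s)]` for the random set `s` of `+1` coordinates. -/
noncomputable def pmCharFun {n : ℕ} (p : Fin n → ℝ) (ψ : ℝ) : ℂ :=
  ∏ j, ((p j : ℂ) * Complex.exp (ψ * Complex.I) + (1 - p j))

lemma pmCharFun_eq_sum {n : ℕ} (p : Fin n → ℝ) (ψ : ℝ) :
    pmCharFun p ψ = ∑ s, (pmWeight p s : ℂ) * Complex.exp (s.card * ψ * Complex.I) := by
  rw [pmCharFun, prod_add, powerset_univ]
  refine sum_congr rfl fun s _ => ?_
  rw [prod_mul_distrib, prod_const, ← compl_eq_univ_sdiff, mul_assoc, ← Complex.exp_nat_mul,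
    pmWeight]
  push_cast
  ring_nf

lemma integral_exp_int_mul_I (m : ℤ) :
    ∫ ψ in -π..π, Complex.exp (m * ψ * Complex.I) = if m = 0 then (2 * π : ℂ) else 0 := by
  rcases eq_or_ne m 0 with rfl | hm
  · simp; ring
  have hmI : (m : ℂ) * Complex.I ≠ 0 := by simp [hm]
  simp_rw [if_neg hm, mul_right_comm _ _ Complex.I, integral_exp_mul_complex hmI]
  rw [div_eq_zero_iff, sub_eq_zero]
  left
  -- `e^{imπ} = e^{-imπ}` since `e^{2imπ} = 1`
  rw [Complex.exp_eq_exp_iff_exists_int]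
  exact ⟨m, by push_cast; ring⟩

lemma integral_exp_neg_mul_pmCharFun {n : ℕ} (p : Fin n → ℝ) (k : ℕ) :
    ∫ ψ in -π..π, Complex.exp (-(k * ψ * Complex.I)) * pmCharFun p ψ
      = 2 * π * ∑ s ∈ univ.filter (fun s : Finset (Fin n) => s.card = k), (pmWeight p s : ℂ) := by
  have hterm (s : Finset (Fin n)) (ψ : ℝ) :
      Complex.exp (-(k * ψ * Complex.I))
          * ((pmWeight p s : ℂ) * Complex.exp (s.card * ψ * Complex.I))
        = pmWeight p s * Complex.exp (((s.card - k : ℤ) : ℂ) * ψ * Complex.I) := by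
    rw [mul_left_comm, ← Complex.exp_add]
    push_cast
    ring_nf
  simp_rw [pmCharFun_eq_sum, mul_sum, hterm]
  rw [intervalIntegral.integral_finsetSum fun s _ => by
    apply Continuous.intervalIntegrable; fun_prop]
  simp_rw [intervalIntegral.integral_const_mul, integral_exp_int_mul_I, sub_eq_zero, Nat.cast_inj,
    mul_ite, mul_zero]
  rw [← sum_filter]
  exact sum_congr rfl fun _ _ => mul_comm _ _

lemma norm_mul_exp_add_one_sub_le_s12 (q ψ : ℝ) :
    ‖(q : ℂ) * Complex.exp (ψ * Complex.I) + (1 - q)‖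
      ≤ Real.exp (-(q * (1 - q)) * (1 - Real.cos ψ)) := by
  set z := (q : ℂ) * Complex.exp (ψ * Complex.I) + (1 - q)
  have hre : z.re = q * Real.cos ψ + (1 - q) := by
    simp [z, Complex.exp_mul_I, ← Complex.ofReal_cos, ← Complex.ofReal_sin]
  have him : z.im = q * Real.sin ψ := by
    simp [z, Complex.exp_mul_I, ← Complex.ofReal_cos, ← Complex.ofReal_sin]
  have hsq : ‖z‖ ^ 2 = 1 - 2 * (q * (1 - q)) * (1 - Real.cos ψ) := by
    rw [Complex.sq_norm, Complex.normSq_apply, hre, him]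
    linear_combination q ^ 2 * Real.sin_sq_add_cos_sq ψ
  have hexp : 1 - 2 * (q * (1 - q)) * (1 - Real.cos ψ)
      ≤ Real.exp (-(q * (1 - q)) * (1 - Real.cos ψ)) ^ 2 := by
    rw [sq, ← Real.exp_add]
    linarith [Real.add_one_le_exp (-(q * (1 - q)) * (1 - Real.cos ψ)
      + -(q * (1 - q)) * (1 - Real.cos ψ))]
  exact le_of_pow_le_pow_left₀ two_ne_zero (Real.exp_pos _).le (hsq ▸ hexp)

lemma norm_pmCharFun_le {n : ℕ} (p : Fin n → ℝ) (hV : 0 ≤ ∑ j, p j * (1 - p j)) {ψ : ℝ}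
    (hψ : |ψ| ≤ π) :
    ‖pmCharFun p ψ‖ ≤ Real.exp (-(2 * ∑ j, p j * (1 - p j)) / π ^ 2 * ψ ^ 2) := by
  calc ‖pmCharFun p ψ‖
      ≤ ∏ j, Real.exp (-(p j * (1 - p j)) * (1 - Real.cos ψ)) := by
        rw [pmCharFun, norm_prod]
        exact prod_le_prod (fun _ _ => norm_nonneg _) fun j _ => norm_mul_exp_add_one_sub_le_s12 _ _
    _ = Real.exp (-(∑ j, p j * (1 - p j)) * (1 - Real.cos ψ)) := by
        rw [← Real.exp_sum, ← sum_mul, sum_neg_distrib]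
    _ ≤ Real.exp (-(2 * ∑ j, p j * (1 - p j)) / π ^ 2 * ψ ^ 2) := by
        have hcos := Real.cos_le_one_sub_mul_cos_sq hψ
        refine Real.exp_le_exp.2 ?_
        calc -(∑ j, p j * (1 - p j)) * (1 - Real.cos ψ)
            ≤ -(∑ j, p j * (1 - p j)) * (2 / π ^ 2 * ψ ^ 2) := by
              nlinarith
          _ = _ := by ring

lemma intervalIntegral_exp_neg_mul_sq_le {a b c : ℝ} (hab : a ≤ b) (hc : 0 < c) :
    ∫ x in a..b, Real.exp (-c * x ^ 2) ≤ √(π / c) := by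
  rw [intervalIntegral.integral_of_le hab, ← integral_gaussian c]
  exact MeasureTheory.setIntegral_le_integral (integrable_exp_neg_mul_sq hc)
    (.of_forall fun _ => (Real.exp_pos _).le)

theorem abs_sum_pmWeight_card_eq_le {n : ℕ} (p : Fin n → ℝ) (hV : 0 < ∑ j, p j * (1 - p j))
    (k : ℕ) :
    |∑ s ∈ univ.filter (fun s : Finset (Fin n) => s.card = k), pmWeight p s|
      ≤ 1 / √(∑ j, p j * (1 - p j)) := by
  set V := ∑ j, p j * (1 - p j)
  set P := ∑ s ∈ univ.filter (fun s : Finset (Fin n) => s.card = k), pmWeight p s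
  have hpi : -π ≤ π := by linarith [Real.pi_pos]
  have hc : 0 < 2 * V / π ^ 2 := by positivity
  have hP : 2 * π * |P| ≤ √(π / (2 * V / π ^ 2)) :=
    calc 2 * π * |P| = ‖∫ ψ in -π..π, Complex.exp (-(k * ψ * Complex.I)) * pmCharFun p ψ‖ := by
          rw [integral_exp_neg_mul_pmCharFun, ← Complex.ofReal_sum, norm_mul, Complex.norm_real,
            Real.norm_eq_abs]
          congr 1
          simp [abs_of_pos Real.pi_pos]
      _ ≤ ∫ ψ in -π..π, Real.exp (-(2 * V) / π ^ 2 * ψ ^ 2) := by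
          refine intervalIntegral.norm_integral_le_of_norm_le hpi (.of_forall fun ψ hψ => ?_)
            (by apply Continuous.intervalIntegrable; fun_prop)
          rw [norm_mul, Complex.norm_exp, ← neg_mul, ← neg_mul]
          simpa using norm_pmCharFun_le p hV.le (abs_le.2 ⟨hψ.1.le, hψ.2⟩)
      _ ≤ √(π / (2 * V / π ^ 2)) := by
          rw [neg_div]
          exact intervalIntegral_exp_neg_mul_sq_le hpi hc
  have hroot : √(π / (2 * V / π ^ 2)) ≤ 2 * π / √V := by
    rw [le_div_iff₀ (by positivity), ← Real.sqrt_mul (by positivity),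
      show π / (2 * V / π ^ 2) * V = π ^ 3 / 2 by field_simp, Real.sqrt_le_iff]
    constructor <;> nlinarith [Real.pi_le_four, Real.pi_pos]
  have h2π : 2 * π * |P| ≤ 2 * π * (1 / √V) := by
    rw [mul_one_div]
    exact hP.trans hroot
  exact le_of_mul_le_mul_left h2π (by positivity)

/-- **Anti-concentration for sums of independent signs.**  There is an absolute
constant `C > 0` such that for independent `±1`-valued random variables with
`Pr[z_j = 1] = p_j` and `σ² = ∑_j p_j(1-p_j) > 0`, for every integer `t`,
`Pr[∑_j z_j = t] ≤ C / σ`.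
(The sum `∑_j z_j` equals `2|s| - n` where `s` is the set of `+1` coordinates.) -/
theorem anticoncentration_pm_one :
    ∃ C : ℝ, 0 < C ∧
      ∀ (n : ℕ) (p : Fin n → ℝ), (∀ j, 0 ≤ p j ∧ p j ≤ 1) →
        0 < ∑ j, p j * (1 - p j) →
        ∀ t : ℤ,
          ∑ s ∈ Finset.univ.filter
              (fun s : Finset (Fin n) => 2 * (s.card : ℤ) - (n : ℤ) = t), pmWeight p s
            ≤ C / Real.sqrt (∑ j, p j * (1 - p j)) := by
  refine ⟨1, one_pos, fun n p _ hV t => ?_⟩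
  obtain hempty | ⟨s₀, hs₀⟩ :=
    (univ.filter fun s : Finset (Fin n) => 2 * (s.card : ℤ) - n = t).eq_empty_or_nonempty
  · rw [hempty, sum_empty]
    positivity
  have hcard : univ.filter (fun s : Finset (Fin n) => 2 * (s.card : ℤ) - n = t)
      = univ.filter (fun s : Finset (Fin n) => s.card = s₀.card) := by
    have ht := (mem_filter.1 hs₀).2
    exact filter_congr fun s _ => by omega
  rw [hcard]
  exact (le_abs_self _).trans (abs_sum_pmWeight_card_eq_le p hV _)
end
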